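/- In G(n,p), run the alternative forcing process in which every blue vertex u forces each white neighbor independently with probability min{1, deg_{Y_{≤i}}[u]/d̃_L}, and suppose Y_{≤i} ⊆ V consists of the blue vertices after i ≥ 0 rounds. Let Y_{i+1} denote the set of white vertices forced in round i+1. Then for any S ⊆ V ∖ Y_{≤i} and any S* ⊆ V ∖ (Y_{≤i} ∪ S), conditioned on the event {Y_{i+1} = S}, on the set Y_{≤i}, and on the edges within Y_{≤i}, the number of edges e(Y_{≤i}, S ∪ S*) is stochastically upper bounded by |S| + Bin(|Y_{≤i}|·|S| + |Y_{≤i}|·|S*|, p). -/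

import Mathlib

open Finset Filter Real
open scoped Classical

namespace PZF

variable {V : Type*} [Fintype V] [DecidableEq V]

/-- The closed degree of `u` into the set `B`, i.e. `|N[u] ∩ B|`. -/
noncomputable def closedDegIn (G : SimpleGraph V) (B : Finset V) (u : V) : ℕ :=
  ((insert u (G.neighborSet u)) ∩ (B : Set V)).ncard

/-- The degree of `u` in `G`. -/
noncomputable def deg (G : SimpleGraph V) (u : V) : ℕ :=
  (G.neighborSet u).ncard

/-- The probability that the blue vertex `u` forces its white neighbour `v` in one round of
probabilistic zero forcing, when the current blue set is `B`: it equals `|N[u] ∩ B| / deg u`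
when `u` is blue, `v` is a white neighbour of `u`, and `0` otherwise. -/
noncomputable def edgeForceProb (G : SimpleGraph V) (B : Finset V) (u v : V) : ℝ :=
  if G.Adj u v ∧ u ∈ B ∧ v ∉ B then (closedDegIn G B u : ℝ) / (deg G u : ℝ) else 0

/-- Given per-ordered-pair forcing probabilities `q u v` (each attempt independent), the
probability that one round starting from the blue set `B` produces exactly the blue set `B'`. -/
noncomputable def stepOfQ (q : V → V → ℝ) (B B' : Finset V) : ℝ :=
  if B ⊆ B' then
    (∏ v ∈ B' \ B, (1 - ∏ u ∈ B, (1 - q u v))) * ∏ v ∈ B'ᶜ, ∏ u ∈ B, (1 - q u v)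
  else 0

/-- The transition rule of standard probabilistic zero forcing, as a function of the history
(the list of blue sets so far; only the current blue set matters). -/
noncomputable def stdStep (G : SimpleGraph V) (hist : List (Finset V)) (B' : Finset V) : ℝ :=
  stepOfQ (edgeForceProb G (hist.getLastD ∅)) (hist.getLastD ∅) B'

/-- Probability of a given future trajectory, given the history so far. -/
noncomputable def seqProbAux (step : List (Finset V) → Finset V → ℝ) :
    List (Finset V) → List (Finset V) → ℝ
  | _, [] => 1
  | hist, B :: rest => step hist B * seqProbAux step (hist ++ [B]) rest

/-- The probability that, running the process given by the transition rule `step` from the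
initial blue set `S` for `ℓ` rounds, the resulting trajectory (including the initial set)
satisfies the predicate `E`. -/
noncomputable def trajEventProb (step : List (Finset V) → Finset V → ℝ) (S : Finset V)
    (ℓ : ℕ) (E : List (Finset V) → Prop) : ℝ :=
  ∑ f : Fin ℓ → Finset V,
    if E (S :: List.ofFn f) then seqProbAux step [S] (List.ofFn f) else 0

/-- `P(A(S,T,ℓ))`: the probability that, starting probabilistic zero forcing from the blue
set `S`, after `ℓ` rounds every vertex of `T` is blue. -/
noncomputable def probForced (G : SimpleGraph V) (S T : Finset V) (ℓ : ℕ) : ℝ :=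
  trajEventProb (stdStep G) S ℓ fun traj => T ⊆ traj.getLastD ∅

/-- `P(pt_pzf(G,S) ≤ ℓ)`: the probability that all vertices are blue after `ℓ` rounds. -/
noncomputable def probAllBlue (G : SimpleGraph V) (S : Finset V) (ℓ : ℕ) : ℝ :=
  probForced G S Finset.univ ℓ

/-- The probability of a fixed graph `G` under the Erdős–Rényi measure `G(n,p)`. -/
noncomputable def erProb (n : ℕ) (p : ℝ) (G : SimpleGraph (Fin n)) : ℝ :=
  p ^ G.edgeSet.ncard * (1 - p) ^ (n.choose 2 - G.edgeSet.ncard)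

/-- The probability that `G(n,p)` satisfies the property `E`. -/
noncomputable def graphProb (n : ℕ) (p : ℝ) (E : SimpleGraph (Fin n) → Prop) : ℝ :=
  ∑ G : SimpleGraph (Fin n), if E G then erProb n p G else 0

/-- `P(pt_pzf(G(n,p), v) ≤ ℓ)`: the joint probability (over the random graph and the forcing
randomness) that probabilistic zero forcing started at `{v}` turns all of `G(n,p)` blue
within `ℓ` rounds. -/
noncomputable def prPZFwithin (n : ℕ) (p : ℝ) (v : Fin n) (ℓ : ℕ) : ℝ :=
  ∑ G : SimpleGraph (Fin n), erProb n p G * probAllBlue G {v} ℓ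

/-- Sample space for one round of the modified forcing rule on `G(n,p)` : a configuration of
potential edges together with a configuration of forcing coins for each ordered pair. -/
abbrev Omega (n : ℕ) := (Sym2 (Fin n) → Bool) × (Fin n × Fin n → Bool)

/-- Bernoulli weight. -/
noncomputable def bern (r : ℝ) (b : Bool) : ℝ := if b then r else 1 - r

/-- The modified forcing probability `min {1, deg_{Y₀}[u] / d̃_L}`, where the closed degree of
`u` into `Y₀` is computed in the exposed (conditioned) graph `H` of edges within `Y₀`. -/
noncomputable def forceP (n : ℕ) (dL : ℝ) (H : SimpleGraph (Fin n)) (Y₀ : Finset (Fin n))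
    (u : Fin n) : ℝ :=
  min 1 ((closedDegIn H Y₀ u : ℝ) / dL)

/-- The weight of a configuration: each potential edge appears independently with probability
`p`, and the forcing coin of a pair `(u, v)` with `u ∈ Y₀`, `v ∉ Y₀` succeeds independently
with probability `min {1, deg_{Y₀}[u] / d̃_L}` (the remaining coins are unused randomness). -/
noncomputable def wt (n : ℕ) (p dL : ℝ) (H : SimpleGraph (Fin n)) (Y₀ : Finset (Fin n))
    (ω : Omega n) : ℝ :=
  (∏ e : Sym2 (Fin n), bern p (ω.1 e)) *
    ∏ x : Fin n × Fin n,
      bern (if x.1 ∈ Y₀ ∧ x.2 ∉ Y₀ then forceP n dL H Y₀ x.1 else p) (ω.2 x)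

/-- Probability of an event, conditionally on the exposed edges within `Y₀` (recorded in `H`). -/
noncomputable def Pr (n : ℕ) (p dL : ℝ) (H : SimpleGraph (Fin n)) (Y₀ : Finset (Fin n))
    (E : Omega n → Prop) : ℝ :=
  ∑ ω : Omega n, if E ω then wt n p dL H Y₀ ω else 0

/-- `Y₁(u)`: the set of vertices of `V \\ Y₀` forced by `u` in this round, namely the white
vertices `v` joined to `u` by an edge whose forcing coin succeeded. -/
noncomputable def Y1 (n : ℕ) (Y₀ : Finset (Fin n)) (u : Fin n) (ω : Omega n) : Finset (Fin n) :=
  Finset.univ.filter fun v => v ∉ Y₀ ∧ ω.1 s(u, v) = true ∧ ω.2 (u, v) = true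

/-- `Y_{i+1}` : the set of all white vertices forced in this round. -/
noncomputable def forcedSet (n : ℕ) (B₀ : Finset (Fin n)) (ω : Omega n) : Finset (Fin n) :=
  Finset.univ.filter fun v => v ∉ B₀ ∧ ∃ u ∈ B₀, ω.1 s(u, v) = true ∧ ω.2 (u, v) = true

/-- `e(A, B)` : the number of edges between the disjoint sets `A` and `B` (pairs `(u,v)` with
`u ∈ A`, `v ∈ B`, and `{u,v}` an edge of the random graph). -/
noncomputable def eCount (n : ℕ) (A B : Finset (Fin n)) (ω : Omega n) : ℕ :=
  ∑ u ∈ A, ∑ v ∈ B, if ω.1 s(u, v) = true then 1 else 0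

/-- `P(Bin(m, p) ≥ k)`, the upper tail of the binomial distribution. -/
noncomputable def binTail (m : ℕ) (p : ℝ) (k : ℕ) : ℝ :=
  ∑ j ∈ Finset.range (m + 1),
    if k ≤ j then (m.choose j : ℝ) * p ^ j * (1 - p) ^ (m - j) else 0

end PZF

/-!
Split the event `{Y_{i+1} = S}` according to the first forcer of every vertex, i.e. the least
blue vertex whose edge and coin both succeed. Given the edges, `{firstForcer = φ}` is a product
event in the coins, so summing the coins out leaves independent edge bits with modified weights.
The edge from each `v ∈ S` to `φ v` accounts for at most `|S|` edges; every other edge between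
`B₀` and `S ∪ S*` is either unconstrained or conditioned on not forcing, hence present with
conditional probability at most `p`, and independent such bits are dominated by a binomial.
-/

theorem Finset.min_filter_univ_eq_iff {α : Type*} [LinearOrder α] [Fintype α] (P : α → Prop)
    [DecidablePred P] (m : WithTop α) :
    (univ.filter P).min = m ↔
      ∀ a : α, ((a : WithTop α) < m → ¬P a) ∧ ((a : WithTop α) = m → P a) := by
  constructor
  · rintro rfl a
    refine ⟨fun hlt hPa => ?_, fun heq => (mem_filter.1 (mem_of_min heq.symm)).2⟩
    exact (min_le (mem_filter.2 ⟨mem_univ a, hPa⟩)).not_gt hlt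
  · intro h
    induction m using WithTop.recTopCoe with
    | top => exact min_eq_top.2 (filter_eq_empty_iff.2 fun a _ => (h a).1 (WithTop.coe_lt_top a))
    | coe m =>
      refine le_antisymm (min_le (mem_filter.2 ⟨mem_univ m, (h m).2 rfl⟩))
        (Finset.le_min fun a ha => not_lt.1 fun hlt => (h a).1 hlt (mem_filter.1 ha).2)

theorem Fintype.sum_ite_forall_prod {ι κ R : Type*} [Fintype ι] [DecidableEq ι] [Fintype κ]
    [CommSemiring R] (A : ι → κ → Prop) (f : ι → κ → R) :
    (∑ c : ι → κ, if ∀ i, A i (c i) then ∏ i, f i (c i) else 0) =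
      ∏ i, ∑ x, if A i x then f i x else 0 := by
  rw [Fintype.prod_sum]
  exact Finset.sum_congr rfl fun c _ => by simp only [prod_ite_zero]

theorem Fintype.prod_add_eq_sum_prod {ι R : Type*} [Fintype ι] [DecidableEq ι] [CommSemiring R]
    (f : ι → Bool → R) :
    ∏ i, (f i true + f i false) = ∑ g : ι → Bool, ∏ i, f i (g i) := by
  simp only [← Fintype.sum_bool]
  exact Fintype.prod_sum f

namespace PZF

section BinomialTail

variable {p : ℝ}

lemma binTail_nonneg (hp0 : 0 ≤ p) (hp1 : p ≤ 1) (m t : ℕ) : 0 ≤ binTail m p t :=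
  sum_nonneg fun j _ => by
    split_ifs
    · exact mul_nonneg (mul_nonneg (Nat.cast_nonneg _) (pow_nonneg hp0 _))
        (pow_nonneg (sub_nonneg.2 hp1) _)
    · exact le_rfl

lemma binTail_antitone (hp0 : 0 ≤ p) (hp1 : p ≤ 1) (m : ℕ) : Antitone (binTail m p) :=
  fun t t' htt' => sum_le_sum fun j _ => by
    split_ifs with h h'
    · exact le_rfl
    · omega
    · exact mul_nonneg (mul_nonneg (Nat.cast_nonneg _) (pow_nonneg hp0 _))
        (pow_nonneg (sub_nonneg.2 hp1) _)
    · exact le_rfl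

lemma binTail_zero (p : ℝ) (t : ℕ) : binTail 0 p t = if t = 0 then 1 else 0 := by
  simp [binTail]

lemma binTail_succ (m : ℕ) (p : ℝ) (t : ℕ) :
    binTail (m + 1) p t = p * binTail m p (t - 1) + (1 - p) * binTail m p t := by
  have hsucc : p * binTail m p (t - 1) = ∑ i ∈ range (m + 1),
      if t ≤ i + 1 then (m.choose i : ℝ) * p ^ (i + 1) * (1 - p) ^ (m + 1 - (i + 1))
        else 0 := by
    rw [binTail, mul_sum]
    refine sum_congr rfl fun i _ => ?_
    rw [Nat.add_sub_add_right]
    split_ifs <;> first | omega | ring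
  have hfail : (1 - p) * binTail m p t = ∑ i ∈ range (m + 1),
      (if t ≤ i + 1 then (m.choose (i + 1) : ℝ) * p ^ (i + 1) * (1 - p) ^ (m + 1 - (i + 1))
        else 0) +
      if t ≤ 0 then (m.choose 0 : ℝ) * p ^ 0 * (1 - p) ^ (m + 1 - 0) else 0 := by
    rw [binTail, mul_sum, ← sum_range_succ' (fun j => if t ≤ j then
      (m.choose j : ℝ) * p ^ j * (1 - p) ^ (m + 1 - j) else 0), sum_range_succ _ (m + 1)]
    simp only [Nat.choose_succ_self, Nat.cast_zero, zero_mul, ite_self, add_zero]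
    refine sum_congr rfl fun j hj => ?_
    rw [Nat.sub_add_comm (Nat.lt_succ_iff.1 (mem_range.1 hj)), pow_succ]
    split_ifs <;> ring
  rw [binTail, sum_range_succ', hsucc, hfail]
  simp only [Nat.choose_succ_succ', Nat.choose_zero_right, Nat.cast_add, add_mul, ite_add_zero,
    sum_add_distrib]
  ring

/-- Adding one trial whose success probability `u / (u + z)` is at most `p`. -/
lemma binTail_pred_mul_add_le (hp0 : 0 ≤ p) (hp1 : p ≤ 1) {u z : ℝ} (hu : u ≤ p * (u + z))
    (m t : ℕ) :
    binTail m p (t - 1) * u + binTail m p t * z ≤ binTail (m + 1) p t * (u + z) := by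
  rw [binTail_succ]
  nlinarith [mul_nonneg (sub_nonneg.2 (binTail_antitone hp0 hp1 m (Nat.sub_le t 1)))
    (sub_nonneg.2 hu)]

lemma binTail_le_binTail_succ (hp0 : 0 ≤ p) (hp1 : p ≤ 1) (m t : ℕ) :
    binTail m p t ≤ binTail (m + 1) p t := by
  rw [binTail_succ]
  nlinarith [binTail_antitone hp0 hp1 m (Nat.sub_le t 1)]

lemma binTail_mono (hp0 : 0 ≤ p) (hp1 : p ≤ 1) {m m' : ℕ} (h : m ≤ m') (t : ℕ) :
    binTail m p t ≤ binTail m' p t :=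
  monotone_nat_of_le_succ (fun m => binTail_le_binTail_succ hp0 hp1 m t) h

end BinomialTail

section BernoulliDomination

variable {β : Type*} [Fintype β] [DecidableEq β]

def pinWeight (w : β → Bool → ℝ) (a : β) (v : Bool) : β → Bool → ℝ :=
  fun b x => if b = a ∧ x ≠ v then 0 else w b x

lemma prod_pinWeight (w : β → Bool → ℝ) (a : β) (v : Bool) (g : β → Bool) :
    ∏ b, pinWeight w a v b (g b) = if g a = v then ∏ b, w b (g b) else 0 := by
  split_ifs with hga
  · refine prod_congr rfl fun b _ => if_neg ?_
    rintro ⟨rfl, h⟩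
    exact h hga
  · exact prod_eq_zero (mem_univ a) (if_pos ⟨rfl, hga⟩)

lemma prod_pinWeight_add (w : β → Bool → ℝ) (a : β) (v : Bool) :
    ∏ b, (pinWeight w a v b true + pinWeight w a v b false) =
      w a v * ∏ b ∈ univ.erase a, (w b true + w b false) := by
  rw [← mul_prod_erase univ _ (mem_univ a)]
  congr 1
  · cases v <;> simp [pinWeight]
  · exact prod_congr rfl fun b hb => by simp [pinWeight, ne_of_mem_erase hb]

lemma ite_card_filter_insert_eq {a : β} {R : Finset β} (haR : a ∉ R) (w : β → Bool → ℝ)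
    (t : ℕ) (g : β → Bool) :
    (if t ≤ #{b ∈ insert a R | g b = true} then ∏ b, w b (g b) else 0) =
      (if t - 1 ≤ #{b ∈ R | g b = true} then ∏ b, pinWeight w a true b (g b) else 0) +
        (if t ≤ #{b ∈ R | g b = true} then ∏ b, pinWeight w a false b (g b) else 0) := by
  rw [prod_pinWeight, prod_pinWeight, filter_insert]
  cases g a
  · simp
  · rw [if_pos rfl, card_insert_of_notMem fun h => haR (mem_filter.1 h).1]
    simp only [if_true, Bool.true_eq_false, if_false, ite_self, add_zero]
    exact if_congr (by omega) rfl rfl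

variable {p : ℝ}

/-- Independent Bernoulli trials with success probabilities at most `p` on `R` are
stochastically dominated by `Bin(#R, p)`; the weights need not be normalised. -/
theorem sum_tail_le_binTail_mul_prod (hp0 : 0 ≤ p) (hp1 : p ≤ 1) (R : Finset β)
    (w : β → Bool → ℝ) (hw : ∀ b x, 0 ≤ w b x)
    (hR : ∀ b ∈ R, w b true ≤ p * (w b true + w b false)) (t : ℕ) :
    (∑ g : β → Bool, if t ≤ #{b ∈ R | g b = true} then ∏ b, w b (g b) else 0) ≤
      binTail #R p t * ∏ b, (w b true + w b false) := by
  induction R using Finset.induction_on generalizing w t with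
  | empty =>
    rw [card_empty, binTail_zero, Fintype.prod_add_eq_sum_prod]
    rcases Nat.eq_zero_or_pos t with rfl | ht
    · simp
    · simp [Nat.pos_iff_ne_zero.1 ht, Nat.not_le.2 ht]
  | @insert a R haR ih =>
    have hpin (v : Bool) : ∀ b ∈ R, pinWeight w a v b true ≤
        p * (pinWeight w a v b true + pinWeight w a v b false) := fun b hb => by
      simpa [pinWeight, ne_of_mem_of_not_mem hb haR] using hR b (mem_insert_of_mem hb)
    have hpin_nonneg (v : Bool) (b : β) (x : Bool) : 0 ≤ pinWeight w a v b x := by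
      unfold pinWeight
      split_ifs
      exacts [le_rfl, hw b x]
    set P := ∏ b ∈ univ.erase a, (w b true + w b false)
    have hP : 0 ≤ P := prod_nonneg fun b _ => add_nonneg (hw b true) (hw b false)
    calc _ = (∑ g : β → Bool,
          if t - 1 ≤ #{b ∈ R | g b = true} then ∏ b, pinWeight w a true b (g b) else 0) +
        ∑ g : β → Bool,
          if t ≤ #{b ∈ R | g b = true} then ∏ b, pinWeight w a false b (g b) else 0 := by
          rw [← sum_add_distrib]
          exact Finset.sum_congr rfl fun g _ => ite_card_filter_insert_eq haR w t g
      _ ≤ (binTail #R p (t - 1) * w a true + binTail #R p t * w a false) * P := by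
          have h₁ := ih _ (hpin_nonneg true) (hpin true) (t - 1)
          have h₀ := ih _ (hpin_nonneg false) (hpin false) t
          rw [prod_pinWeight_add] at h₁ h₀
          linarith
      _ ≤ binTail (#R + 1) p t * (w a true + w a false) * P :=
          mul_le_mul_of_nonneg_right
            (binTail_pred_mul_add_le hp0 hp1 (hR a (mem_insert_self a R)) _ _) hP
      _ = binTail #(insert a R) p t * ∏ b, (w b true + w b false) := by
          rw [card_insert_of_notMem haR, ← mul_prod_erase univ _ (mem_univ a)]
          ring

end BernoulliDomination

variable {n : ℕ}

section FirstForcer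

def Forces (B : Finset (Fin n)) (x : Fin n × Fin n) (e c : Bool) : Prop :=
  x.1 ∈ B ∧ x.2 ∉ B ∧ e = true ∧ c = true

/-- `⊤` encodes that `v` is not forced. -/
noncomputable def firstForcer (B : Finset (Fin n)) (ω : Omega n) (v : Fin n) : WithTop (Fin n) :=
  (univ.filter fun u => Forces B (u, v) (ω.1 s(u, v)) (ω.2 (u, v))).min

lemma forcedSet_eq_filter_firstForcer (B : Finset (Fin n)) (ω : Omega n) :
    forcedSet n B ω = univ.filter fun v => firstForcer B ω v ≠ ⊤ := by
  ext v
  simp only [forcedSet, firstForcer, Finset.mem_filter, mem_univ, true_and, ne_eq,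
    Finset.min_eq_top, ← nonempty_iff_ne_empty, filter_nonempty_iff]
  exact ⟨fun ⟨hv, u, hu, hu'⟩ => ⟨u, hu, hv, hu'⟩,
    fun ⟨u, hu, hv, hu'⟩ => ⟨hv, u, hu, hu'⟩⟩

def Allowed (B : Finset (Fin n)) (φ : Fin n → WithTop (Fin n)) (x : Fin n × Fin n)
    (e c : Bool) : Prop :=
  ((x.1 : WithTop (Fin n)) < φ x.2 → ¬Forces B x e c) ∧
    ((x.1 : WithTop (Fin n)) = φ x.2 → Forces B x e c)

lemma firstForcer_eq_iff {B : Finset (Fin n)} {ω : Omega n} {φ : Fin n → WithTop (Fin n)} :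
    firstForcer B ω = φ ↔
      ∀ x : Fin n × Fin n, Allowed B φ x (ω.1 s(x.1, x.2)) (ω.2 x) := by
  simp only [funext_iff, firstForcer, Finset.min_filter_univ_eq_iff, Prod.forall, Allowed]
  exact forall_comm

end FirstForcer

section Weights

variable (p dL : ℝ) (H : SimpleGraph (Fin n)) (B : Finset (Fin n))
  (φ : Fin n → WithTop (Fin n))

noncomputable def coinProb (x : Fin n × Fin n) : ℝ :=
  if x.1 ∈ B ∧ x.2 ∉ B then forceP n dL H B x.1 else p

noncomputable def allowedCoinWeight (x : Fin n × Fin n) (e : Bool) : ℝ :=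
  ∑ c : Bool, if Allowed B φ x e c then bern (coinProb p dL H B x) c else 0

/-- The weight of the edge bit of `z` once the coins of the ordered pairs over `z` have been
summed out subject to `Allowed`. -/
noncomputable def edgeWeight (z : Sym2 (Fin n)) (e : Bool) : ℝ :=
  bern p e * ∏ x with s(x.1, x.2) = z, allowedCoinWeight p dL H B φ x e

lemma wt_eq (g : Sym2 (Fin n) → Bool) (c : Fin n × Fin n → Bool) :
    wt n p dL H B (g, c) = (∏ z, bern p (g z)) * ∏ x, bern (coinProb p dL H B x) (c x) :=
  rfl

lemma prod_edgeWeight (g : Sym2 (Fin n) → Bool) :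
    ∏ z, edgeWeight p dL H B φ z (g z) =
      (∏ z, bern p (g z)) * ∏ x, allowedCoinWeight p dL H B φ x (g s(x.1, x.2)) := by
  simp only [edgeWeight]
  rw [prod_mul_distrib, ← prod_fiberwise univ fun x : Fin n × Fin n => s(x.1, x.2)]
  congr 1
  exact prod_congr rfl fun z _ => prod_congr rfl fun x hx => by rw [(mem_filter.1 hx).2]

/-- Conditionally on the edges, `firstForcer = φ` is a product event in the coins. -/
lemma Pr_and_firstForcer_eq (E : (Sym2 (Fin n) → Bool) → Prop) [DecidablePred E] :
    Pr n p dL H B (fun ω => E ω.1 ∧ firstForcer B ω = φ) =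
      ∑ g, if E g then ∏ z, edgeWeight p dL H B φ z (g z) else 0 := by
  simp only [Pr, firstForcer_eq_iff]
  rw [Fintype.sum_prod_type]
  refine Finset.sum_congr rfl fun g _ => ?_
  split_ifs with hE
  · simp only [hE, true_and, wt_eq, ← mul_ite_zero, ← mul_sum]
    rw [Fintype.sum_ite_forall_prod, prod_edgeWeight]
    rfl
  · simp [hE]

end Weights

section WeightBounds

variable {p dL : ℝ} {H : SimpleGraph (Fin n)} {B : Finset (Fin n)}
  {φ : Fin n → WithTop (Fin n)}

lemma bern_nonneg (hp0 : 0 ≤ p) (hp1 : p ≤ 1) (b : Bool) : 0 ≤ bern p b := by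
  cases b
  · exact sub_nonneg.2 hp1
  · exact hp0

lemma bern_coinProb_nonneg (hp0 : 0 ≤ p) (hp1 : p ≤ 1) (hdL : 0 ≤ dL) (x : Fin n × Fin n)
    (b : Bool) : 0 ≤ bern (coinProb p dL H B x) b := by
  unfold coinProb
  split_ifs
  · exact bern_nonneg (le_min zero_le_one (div_nonneg (Nat.cast_nonneg _) hdL))
      (min_le_left _ _) b
  · exact bern_nonneg hp0 hp1 b

lemma Pr_nonneg (hp0 : 0 ≤ p) (hp1 : p ≤ 1) (hdL : 0 ≤ dL) (E : Omega n → Prop) :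
    0 ≤ Pr n p dL H B E :=
  sum_nonneg fun ω _ => by
    split_ifs
    · exact mul_nonneg (prod_nonneg fun z _ => bern_nonneg hp0 hp1 _)
        (prod_nonneg fun x _ => bern_coinProb_nonneg hp0 hp1 hdL x _)
    · exact le_rfl

lemma allowedCoinWeight_nonneg (hp0 : 0 ≤ p) (hp1 : p ≤ 1) (hdL : 0 ≤ dL)
    (x : Fin n × Fin n) (e : Bool) : 0 ≤ allowedCoinWeight p dL H B φ x e :=
  sum_nonneg fun c _ => by
    split_ifs
    · exact bern_coinProb_nonneg hp0 hp1 hdL x c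
    · exact le_rfl

lemma edgeWeight_nonneg (hp0 : 0 ≤ p) (hp1 : p ≤ 1) (hdL : 0 ≤ dL) (z : Sym2 (Fin n))
    (e : Bool) : 0 ≤ edgeWeight p dL H B φ z e :=
  mul_nonneg (bern_nonneg hp0 hp1 e)
    (prod_nonneg fun x _ => allowedCoinWeight_nonneg hp0 hp1 hdL x e)

/-- Away from the first-forcer pairs, a present edge only restricts the coins further. -/
lemma allowedCoinWeight_true_le_false (hp0 : 0 ≤ p) (hp1 : p ≤ 1) (hdL : 0 ≤ dL)
    {x : Fin n × Fin n} (hx : (x.1 : WithTop (Fin n)) = φ x.2 → x.2 ∈ B) :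
    allowedCoinWeight p dL H B φ x true ≤ allowedCoinWeight p dL H B φ x false := by
  refine sum_le_sum fun c _ => ?_
  have hmono : Allowed B φ x true c → Allowed B φ x false c := fun ⟨_, h⟩ =>
    ⟨fun _ hF => Bool.false_ne_true hF.2.2.1, fun hxφ => absurd (hx hxφ) (h hxφ).2.1⟩
  split_ifs with h₁ h₂
  · exact le_rfl
  · exact absurd (hmono h₁) h₂
  · exact bern_coinProb_nonneg hp0 hp1 hdL x c
  · exact le_rfl

lemma edgeWeight_true_le (hp0 : 0 ≤ p) (hp1 : p ≤ 1) (hdL : 0 ≤ dL) {z : Sym2 (Fin n)}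
    (hz : ∀ x : Fin n × Fin n, s(x.1, x.2) = z →
      (x.1 : WithTop (Fin n)) = φ x.2 → x.2 ∈ B) :
    edgeWeight p dL H B φ z true ≤
      p * (edgeWeight p dL H B φ z true + edgeWeight p dL H B φ z false) := by
  have hK : ∏ x with s(x.1, x.2) = z, allowedCoinWeight p dL H B φ x true ≤
      ∏ x with s(x.1, x.2) = z, allowedCoinWeight p dL H B φ x false :=
    Finset.prod_le_prod (fun x _ => allowedCoinWeight_nonneg hp0 hp1 hdL x true)
      fun x hx => allowedCoinWeight_true_le_false hp0 hp1 hdL (hz x (mem_filter.1 hx).2)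
  have hK₀ : 0 ≤ ∏ x with s(x.1, x.2) = z, allowedCoinWeight p dL H B φ x true :=
    prod_nonneg fun x _ => allowedCoinWeight_nonneg hp0 hp1 hdL x true
  simp only [edgeWeight, bern, if_true, Bool.false_eq_true, if_false]
  nlinarith [mul_nonneg (mul_nonneg hp0 (sub_nonneg.2 hp1)) (sub_nonneg.2 hK)]

end WeightBounds

section FreeEdges

variable {B T S : Finset (Fin n)} {φ : Fin n → WithTop (Fin n)}

lemma sym2Mk_injOn_product (hT : ∀ w ∈ T, w ∉ B) :
    Set.InjOn (fun x : Fin n × Fin n => s(x.1, x.2)) ↑(B ×ˢ T) := by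
  rintro ⟨a, b⟩ hab ⟨c, d⟩ hcd h
  simp only [coe_product, Set.mem_prod, mem_coe] at hab hcd
  rcases Sym2.eq_iff.1 h with ⟨rfl, rfl⟩ | ⟨rfl, rfl⟩
  · rfl
  · exact absurd hab.1 (hT a hcd.2)

noncomputable def freeEdges (B T : Finset (Fin n)) (φ : Fin n → WithTop (Fin n)) :
    Finset (Sym2 (Fin n)) :=
  ((B ×ˢ T).filter fun x => (x.1 : WithTop (Fin n)) ≠ φ x.2).image fun x => s(x.1, x.2)

lemma card_freeEdges_le : #(freeEdges B T φ) ≤ #B * #T :=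
  (card_image_le.trans (card_filter_le _ _)).trans (card_product B T).le

lemma snd_mem_of_mem_freeEdges {z : Sym2 (Fin n)} (hz : z ∈ freeEdges B T φ)
    (x : Fin n × Fin n) (hxz : s(x.1, x.2) = z) (hxφ : (x.1 : WithTop (Fin n)) = φ x.2) :
    x.2 ∈ B := by
  obtain ⟨y, hy, rfl⟩ := mem_image.1 hz
  rw [mem_filter, mem_product] at hy
  rcases Sym2.eq_iff.1 hxz with ⟨h₁, h₂⟩ | ⟨-, h₂⟩
  · exact absurd (h₂ ▸ h₁ ▸ hxφ) hy.2
  · exact h₂ ▸ hy.1.1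

/-- Each vertex of `T` accounts for at most one edge to its first forcer. -/
lemma eCount_le (hT : ∀ w ∈ T, w ∉ B) (hφ : ∀ v ∈ T, φ v ≠ ⊤ → v ∈ S) (ω : Omega n) :
    eCount n B T ω ≤ #S + #{z ∈ freeEdges B T φ | ω.1 z = true} := by
  have hcount : eCount n B T ω = #{x ∈ B ×ˢ T | ω.1 s(x.1, x.2) = true} := by
    rw [card_filter, sum_product]
    rfl
  rw [hcount, ← card_filter_add_card_filter_not (fun x : Fin n × Fin n =>
    (x.1 : WithTop (Fin n)) = φ x.2)]
  gcongr
  · refine card_le_card_of_injOn Prod.snd (fun x hx => ?_) fun x hx y hy hxy => ?_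
    · simp only [mem_coe, Finset.mem_filter, mem_product] at hx
      exact hφ x.2 hx.1.1.2 (hx.2 ▸ WithTop.coe_ne_top)
    · simp only [mem_coe, Finset.mem_filter, mem_product] at hx hy
      exact Prod.ext (WithTop.coe_injective (hx.2.trans (hxy ▸ hy.2.symm))) hxy
  · rw [freeEdges, filter_image, card_image_of_injOn ((sym2Mk_injOn_product hT).mono
      (coe_subset.2 ((filter_subset _ _).trans (filter_subset _ _))))]
    refine card_le_card fun x hx => ?_
    simp only [Finset.mem_filter] at hx ⊢
    tauto

end FreeEdges

variable {p dL : ℝ} {H : SimpleGraph (Fin n)} {B : Finset (Fin n)}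

lemma Pr_firstForcer_eq (φ : Fin n → WithTop (Fin n)) :
    Pr n p dL H B (fun ω => firstForcer B ω = φ) =
      ∏ z, (edgeWeight p dL H B φ z true + edgeWeight p dL H B φ z false) := by
  have h := Pr_and_firstForcer_eq p dL H B φ fun _ => True
  simp only [true_and, if_true] at h
  rw [h, Fintype.prod_add_eq_sum_prod]

lemma Pr_eCount_ge_and_firstForcer_le (hp0 : 0 ≤ p) (hp1 : p ≤ 1) (hdL : 0 ≤ dL)
    {S T : Finset (Fin n)} {φ : Fin n → WithTop (Fin n)} (hT : ∀ w ∈ T, w ∉ B)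
    (hφ : ∀ v ∈ T, φ v ≠ ⊤ → v ∈ S) {m : ℕ} (hm : #B * #T ≤ m) (k : ℕ) :
    Pr n p dL H B (fun ω => k ≤ eCount n B T ω ∧ firstForcer B ω = φ) ≤
      binTail m p (k - #S) * Pr n p dL H B (fun ω => firstForcer B ω = φ) := by
  set w := edgeWeight p dL H B φ
  have hw : ∀ z e, 0 ≤ w z e := edgeWeight_nonneg hp0 hp1 hdL
  have hP : 0 ≤ ∏ z, (w z true + w z false) :=
    prod_nonneg fun z _ => add_nonneg (hw z _) (hw z _)
  rw [Pr_firstForcer_eq]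
  -- `eCount` reads only the edge bits, so any coin configuration may be paired with `g`.
  calc Pr n p dL H B (fun ω => k ≤ eCount n B T ω ∧ firstForcer B ω = φ)
      = ∑ g : Sym2 (Fin n) → Bool,
          if k ≤ eCount n B T (g, fun _ => false) then ∏ z, w z (g z) else 0 :=
        Pr_and_firstForcer_eq p dL H B φ fun g => k ≤ eCount n B T (g, fun _ => false)
    _ ≤ ∑ g : Sym2 (Fin n) → Bool,
          if k - #S ≤ #{z ∈ freeEdges B T φ | g z = true} then ∏ z, w z (g z) else 0 := by
        refine sum_le_sum fun g _ => ?_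
        have := eCount_le hT hφ (g, fun _ => false)
        dsimp only at this
        split_ifs with h₁ h₂
        · exact le_rfl
        · omega
        · exact prod_nonneg fun z _ => hw z _
        · exact le_rfl
    _ ≤ binTail #(freeEdges B T φ) p (k - #S) * ∏ z, (w z true + w z false) :=
        sum_tail_le_binTail_mul_prod hp0 hp1 _ w hw
          (fun z hz => edgeWeight_true_le hp0 hp1 hdL (snd_mem_of_mem_freeEdges hz))
          _
    _ ≤ binTail m p (k - #S) * ∏ z, (w z true + w z false) :=
        mul_le_mul_of_nonneg_right
          (binTail_mono hp0 hp1 (card_freeEdges_le.trans hm) _) hP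

/-- The forced set is the support of the first-forcer map. -/
lemma Pr_and_forcedSet_eq_sum (E : Omega n → Prop) (S : Finset (Fin n)) :
    Pr n p dL H B (fun ω => E ω ∧ forcedSet n B ω = S) =
      ∑ φ ∈ univ.filter (fun φ : Fin n → WithTop (Fin n) => univ.filter (φ · ≠ ⊤) = S),
        Pr n p dL H B (fun ω => E ω ∧ firstForcer B ω = φ) := by
  simp only [Pr, forcedSet_eq_filter_firstForcer]
  rw [sum_comm]
  refine Finset.sum_congr rfl fun ω _ => ?_
  by_cases hE : E ω <;> simp [hE, Finset.sum_ite_eq]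

end PZF

/-- With the blue set `B₀ = Y_{≤ i}` and the edges within it exposed
(recorded in `H`), run one round of the modified forcing rule and let `Y_{i+1}` be the set of
newly forced vertices.  For any `S ⊆ V \\ B₀` and `S* ⊆ V \\ (B₀ ∪ S)`, conditioned on
`{Y_{i+1} = S}`, the number of edges `e(B₀, S ∪ S*)` is stochastically upper bounded by
`|S| + Bin(|B₀| |S| + |B₀| |S*|, p)`: for every `k`,
`P(e(B₀, S ∪ S*) ≥ k ∣ Y_{i+1} = S) ≤ P(|S| + Bin(|B₀| |S| + |B₀| |S*|, p) ≥ k)`. -/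
theorem edges_to_forced_union_stochastic_bound
    (n : ℕ) (p dL : ℝ) (hp0 : 0 ≤ p) (hp1 : p ≤ 1) (hdL : 0 < dL)
    (H : SimpleGraph (Fin n)) (B₀ : Finset (Fin n))
    (S : Finset (Fin n)) (hS : ∀ w ∈ S, w ∉ B₀)
    (S' : Finset (Fin n)) (hS' : ∀ w ∈ S', w ∉ B₀ ∧ w ∉ S) (k : ℕ) :
    PZF.Pr n p dL H B₀
        (fun ω => k ≤ PZF.eCount n B₀ (S ∪ S') ω ∧ PZF.forcedSet n B₀ ω = S) /
      PZF.Pr n p dL H B₀ (fun ω => PZF.forcedSet n B₀ ω = S) ≤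
    PZF.binTail (B₀.card * S.card + B₀.card * S'.card) p (k - S.card) := by
  open PZF in
  have hT : ∀ w ∈ S ∪ S', w ∉ B₀ := fun w hw =>
    (mem_union.1 hw).elim (hS w) fun h => (hS' w h).1
  have hm : #B₀ * #(S ∪ S') ≤ #B₀ * #S + #B₀ * #S' := by
    rw [← mul_add]
    exact Nat.mul_le_mul_left _ (card_union_le S S')
  have hden := Pr_and_forcedSet_eq_sum (p := p) (dL := dL) (H := H) (B := B₀) (fun _ => True) S
  simp only [true_and] at hden
  refine div_le_of_le_mul₀ (Pr_nonneg hp0 hp1 hdL.le _) (binTail_nonneg hp0 hp1 _ _) ?_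
  rw [Pr_and_forcedSet_eq_sum, hden, mul_sum]
  refine sum_le_sum fun φ hφ => Pr_eCount_ge_and_firstForcer_le hp0 hp1 hdL.le hT
    (fun v _ hv => ?_) hm k
  rw [← (mem_filter.1 hφ).2]
  exact mem_filter.2 ⟨mem_univ v, hv⟩
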